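/- If G is an almost bipartite graph with unique odd cycle C and G is not a König-Egerváry graph, then every critical independent set A of G satisfies A ∩ V(C) = ∅. -/

import Mathlib

namespace AlmostBip

open SimpleGraph

variable {V : Type*}

/-- A set of vertices is independent if no two of its vertices are adjacent. -/
def IsIndepSet (G : SimpleGraph V) (s : Set V) : Prop :=
  s.Pairwise fun a b => ¬ G.Adj a b

/-- The independence number `α(G)`: the maximum size of an independent set. -/
noncomputable def alpha (G : SimpleGraph V) : ℕ :=
  sSup {n | ∃ s : Set V, IsIndepSet G s ∧ s.ncard = n}

/-- `Ω(G)`: the family of all maximum independent sets. -/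
def Omega (G : SimpleGraph V) : Set (Set V) :=
  {s | IsIndepSet G s ∧ s.ncard = alpha G}

/-- `core(G)`: the intersection of all maximum independent sets. -/
def core (G : SimpleGraph V) : Set V := ⋂₀ Omega G

/-- `corona(G)`: the union of all maximum independent sets. -/
def corona (G : SimpleGraph V) : Set V := ⋃₀ Omega G

/-- A matching: a set of edges of `G` that are pairwise non-incident. -/
def IsMatching (G : SimpleGraph V) (M : Set (Sym2 V)) : Prop :=
  M ⊆ G.edgeSet ∧ M.Pairwise fun e f => ∀ x, x ∈ e → x ∉ f

/-- The matching number `μ(G)`: the maximum size of a matching. -/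
noncomputable def mu (G : SimpleGraph V) : ℕ :=
  sSup {n | ∃ M : Set (Sym2 V), IsMatching G M ∧ M.ncard = n}

/-- A König-Egerváry graph: `α(G) + μ(G) = |V(G)|`. -/
def KonigEgervary (G : SimpleGraph V) : Prop :=
  alpha G + mu G = Nat.card V

/-- `N(A)`: the set of vertices having a neighbour in `A`. -/
def nbhd (G : SimpleGraph V) (A : Set V) : Set V :=
  {x | ∃ a ∈ A, G.Adj x a}

/-- The difference `d_G(A) = |A| - |N(A)|`. -/
noncomputable def diffOf (G : SimpleGraph V) (A : Set V) : ℤ :=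
  (A.ncard : ℤ) - ((nbhd G A).ncard : ℤ)

/-- The critical difference `d(G) = max {d_G(A) : A ⊆ V(G)}`. -/
noncomputable def critDiff (G : SimpleGraph V) : ℤ :=
  sSup {d | ∃ A : Set V, diffOf G A = d}

/-- A set is critical if its difference attains the critical difference. -/
def IsCriticalSet (G : SimpleGraph V) (A : Set V) : Prop :=
  diffOf G A = critDiff G

/-- `ker(G)`: the intersection of all critical independent sets. -/
def ker (G : SimpleGraph V) : Set V :=
  ⋂₀ {A : Set V | IsCriticalSet G A ∧ IsIndepSet G A}

/-- A closed walk is an odd cycle if it is a cycle of odd length. -/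
def IsOddCycle (G : SimpleGraph V) {v : V} (c : G.Walk v v) : Prop :=
  c.IsCycle ∧ Odd c.length

/-- `c` is the unique odd cycle of `G`: it is an odd cycle and any odd cycle
of `G` has the same edge set as `c`. -/
def UniqueOddCycle (G : SimpleGraph V) {v : V} (c : G.Walk v v) : Prop :=
  IsOddCycle G c ∧
    ∀ (u : V) (c' : G.Walk u u), IsOddCycle G c' →
      {e | e ∈ c'.edges} = {e | e ∈ c.edges}

/-- `G` is almost bipartite if it has a unique odd cycle. -/
def AlmostBipartite (G : SimpleGraph V) : Prop :=
  ∃ (v : V) (c : G.Walk v v), UniqueOddCycle G c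

/-- `V(C)`: the vertex set of a cycle given as a closed walk. -/
def cycleVerts {G : SimpleGraph V} {v : V} (c : G.Walk v v) : Set V :=
  {u | u ∈ c.support}

/-- `E(C)`: the edge set of a cycle given as a closed walk. -/
def cycleEdges {G : SimpleGraph V} {v : V} (c : G.Walk v v) : Set (Sym2 V) :=
  {e | e ∈ c.edges}

/-- `G - E(C)`: the graph `G` with the edges of the cycle deleted. -/
def Gdel (G : SimpleGraph V) {v : V} (c : G.Walk v v) : SimpleGraph V :=
  G.deleteEdges (cycleEdges c)

/-- `V(D_y)`: the vertex set of the connected component of `G - E(C)`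
containing `y`. -/
def Dset (G : SimpleGraph V) {v : V} (c : G.Walk v v) (y : V) : Set V :=
  {u | (Gdel G c).Reachable u y}

/-- `D_y`: the connected component of `G - E(C)` containing `y`,
as an induced subgraph. -/
def Dgraph (G : SimpleGraph V) {v : V} (c : G.Walk v v) (y : V) :
    SimpleGraph ↥(Dset G c y) :=
  SimpleGraph.induce (Dset G c y) (Gdel G c)

/-- `D_y - y`: the component `D_y` with the vertex `y` deleted. -/
def DgraphMinus (G : SimpleGraph V) {v : V} (c : G.Walk v v) (y : V) :
    SimpleGraph ↥(Dset G c y \ {y}) :=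
  SimpleGraph.induce (Dset G c y \ {y}) (Gdel G c)

/-- `N₁(C)`: the vertices off the cycle having a neighbour on the cycle. -/
def N1 (G : SimpleGraph V) {v : V} (c : G.Walk v v) : Set V :=
  {u | u ∉ cycleVerts c ∧ ∃ w ∈ cycleVerts c, G.Adj u w}

end AlmostBip

open AlmostBip

section Auxiliary

open SimpleGraph AlmostBip

instance aux_finite_sym2 {V : Type*} [Finite V] : Finite (Sym2 V) :=
  Finite.of_surjective (fun p : V × V => s(p.1, p.2))
    (fun e => Sym2.ind (fun a b => ⟨(a, b), rfl⟩) e)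

variable {V : Type*} [Fintype V] {G : SimpleGraph V}

/-! ### Basic facts about `alpha`, `mu`, `critDiff` -/

lemma aux_indep_bdd (G : SimpleGraph V) :
    BddAbove {n | ∃ s : Set V, AlmostBip.IsIndepSet G s ∧ s.ncard = n} := by
  refine ⟨Nat.card V, ?_⟩
  rintro n ⟨s, -, rfl⟩
  simpa [Set.ncard_univ] using Set.ncard_le_ncard (Set.subset_univ s) Set.finite_univ

lemma le_alpha {s : Set V} (hs : AlmostBip.IsIndepSet G s) : s.ncard ≤ alpha G :=
  le_csSup (aux_indep_bdd G) ⟨s, hs, rfl⟩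

lemma exists_alpha (G : SimpleGraph V) :
    ∃ s : Set V, AlmostBip.IsIndepSet G s ∧ s.ncard = alpha G := by
  have h := Nat.sSup_mem (s := {n | ∃ s : Set V, AlmostBip.IsIndepSet G s ∧ s.ncard = n})
    ⟨0, ∅, Set.pairwise_empty _, by simp⟩ (aux_indep_bdd G)
  exact h

lemma aux_matching_bdd (G : SimpleGraph V) :
    BddAbove {n | ∃ M : Set (Sym2 V), IsMatching G M ∧ M.ncard = n} := by
  refine ⟨Nat.card (Sym2 V), ?_⟩
  rintro n ⟨M, -, rfl⟩
  simpa [Set.ncard_univ] using Set.ncard_le_ncard (Set.subset_univ M) Set.finite_univ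

lemma le_mu {M : Set (Sym2 V)} (hM : IsMatching G M) : M.ncard ≤ mu G :=
  le_csSup (aux_matching_bdd G) ⟨M, hM, rfl⟩

lemma exists_mu (G : SimpleGraph V) :
    ∃ M : Set (Sym2 V), IsMatching G M ∧ M.ncard = mu G := by
  have h := Nat.sSup_mem (s := {n | ∃ M : Set (Sym2 V), IsMatching G M ∧ M.ncard = n})
    ⟨0, ∅, ⟨Set.empty_subset _, Set.pairwise_empty _⟩, by simp⟩ (aux_matching_bdd G)
  exact h

lemma diffOf_le_critDiff (G : SimpleGraph V) (B : Set V) : diffOf G B ≤ critDiff G := by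
  have h : {d : ℤ | ∃ A : Set V, diffOf G A = d} = Set.range (diffOf G) := rfl
  exact le_csSup (h ▸ (Set.finite_range (diffOf G)).bddAbove) ⟨B, rfl⟩

/-! ### `alpha + mu ≤ |V|` -/

lemma alpha_add_mu_le (G : SimpleGraph V) : alpha G + mu G ≤ Nat.card V := by
  classical
  obtain ⟨s, hs, hsc⟩ := exists_alpha G
  obtain ⟨M, hM, hMc⟩ := exists_mu G
  rw [← hsc, ← hMc]
  rcases isEmpty_or_nonempty V with hV | hV
  · have hM0 : M = ∅ := by
      refine Set.eq_empty_iff_forall_notMem.mpr fun e he => ?_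
      induction e using Sym2.ind with
      | _ a b => exact (IsEmpty.false a)
    have hs0 : s = ∅ := Set.eq_empty_iff_forall_notMem.mpr fun a _ => IsEmpty.false a
    simp [hM0, hs0]
  · set g : Sym2 V → V := fun e =>
      if h' : ∃ x, x ∈ e ∧ x ∉ s then h'.choose else Classical.arbitrary V with hg
    have hge : ∀ e ∈ M, g e ∈ e ∧ g e ∉ s := by
      intro e he
      have hex : ∃ x, x ∈ e ∧ x ∉ s := by
        have hedge := hM.1 he
        induction e using Sym2.ind with
        | _ a b =>
          rw [SimpleGraph.mem_edgeSet] at hedge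
          by_cases ha : a ∈ s
          · by_cases hb : b ∈ s
            · exact absurd hedge (hs ha hb hedge.ne)
            · exact ⟨b, by simp, hb⟩
          · exact ⟨a, by simp, ha⟩
      simp only [hg, dif_pos hex]
      exact hex.choose_spec
    have hinj : Set.InjOn g M := by
      intro e he e' he' heq
      by_contra hne
      exact (hM.2 he he' hne) (g e) (hge e he).1 (by rw [heq]; exact (hge e' he').1)
    have himg : g '' M ⊆ sᶜ := by
      rintro y ⟨e, he, rfl⟩
      exact (hge e he).2
    have h1 : M.ncard ≤ sᶜ.ncard := by
      rw [← Set.ncard_image_of_injOn hinj]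
      exact Set.ncard_le_ncard himg (Set.toFinite _)
    have h2 := Set.ncard_add_ncard_compl s
    omega

/-! ### Hall's theorem packaged as a matching -/

lemma exists_hall_matching (G : SimpleGraph V) (P Q : Set V) (hdisj : Disjoint P Q)
    (hcond : ∀ B ⊆ P, B.ncard ≤ {q ∈ Q | ∃ b ∈ B, G.Adj b q}.ncard) :
    ∃ M : Set (Sym2 V), IsMatching G M ∧ M.ncard = P.ncard ∧
      ∀ e ∈ M, ∀ x ∈ e, x ∈ P ∪ Q := by
  classical
  have hhall : ∀ s : Finset ↥P,
      s.card ≤ (s.biUnion fun p => (Set.toFinite {q ∈ Q | G.Adj ↑p q}).toFinset).card := by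
    intro s
    have h1 : ((fun p : ↥P => (p : V)) '' ↑s).ncard = s.card := by
      rw [Set.ncard_image_of_injective _ Subtype.val_injective, Set.ncard_coe_finset]
    have h2 := hcond ((fun p : ↥P => (p : V)) '' ↑s) (by rintro y ⟨p, -, rfl⟩; exact p.2)
    rw [h1] at h2
    refine h2.trans (le_of_eq ?_)
    rw [← Set.ncard_coe_finset]
    congr 1
    ext q
    simp only [Set.mem_setOf_eq, Finset.coe_biUnion, Finset.mem_coe, Set.mem_iUnion,
      Set.Finite.mem_toFinset, Set.mem_image]
    constructor
    · rintro ⟨hq, b, ⟨p, hp, rfl⟩, hadj⟩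
      exact ⟨p, hp, hq, hadj⟩
    · rintro ⟨p, hp, hq, hadj⟩
      exact ⟨hq, ↑p, ⟨p, hp, rfl⟩, hadj⟩
  obtain ⟨f, hfinj, hf⟩ := (Finset.all_card_le_biUnion_card_iff_existsInjective' _).mp hhall
  have hfQ : ∀ p : ↥P, f p ∈ Q ∧ G.Adj ↑p (f p) := by
    intro p
    have := hf p
    rwa [Set.Finite.mem_toFinset] at this
  set F : ↥P → Sym2 V := fun p => s((p : V), f p) with hF
  have hFinj : Function.Injective F := by
    intro p p' h
    rw [hF] at h
    simp only [Sym2.eq_iff] at h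
    rcases h with ⟨h1, _⟩ | ⟨h1, _⟩
    · exact Subtype.ext h1
    · exact absurd (hfQ p').1 (by rw [← h1]; exact fun hq => Set.disjoint_left.mp hdisj p.2 hq)
  refine ⟨Set.range F, ⟨?_, ?_⟩, ?_, ?_⟩
  · rintro e ⟨p, rfl⟩
    exact (hfQ p).2
  · rintro e ⟨p, rfl⟩ e' ⟨p', rfl⟩ hne y hy hy'
    have hpp' : p ≠ p' := fun h => hne (by rw [h])
    simp only [hF, Sym2.mem_iff] at hy hy'
    rcases hy with rfl | rfl <;> rcases hy' with h | h
    · exact hpp' (Subtype.ext h)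
    · exact Set.disjoint_left.mp hdisj p.2 (h ▸ (hfQ p').1)
    · exact Set.disjoint_left.mp hdisj p'.2 (h ▸ (hfQ p).1)
    · exact hpp' (hfinj h)
  · rw [← Set.image_univ, Set.ncard_image_of_injective _ hFinj, Set.ncard_univ,
      Nat.card_coe_set_eq]
  · rintro e ⟨p, rfl⟩ y hy
    simp only [hF, Sym2.mem_iff] at hy
    rcases hy with rfl | rfl
    · exact Or.inl p.2
    · exact Or.inr (hfQ p).1

/-- The exchange-counting step used to verify Hall's condition. -/
lemma le_ncard_of_exchange {B TB NT NT' : Set V} (hB : B ⊆ NT)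
    (hsub : NT' ⊆ NT \ B)
    (hineq : (NT.ncard : ℤ) - TB.ncard ≤ NT'.ncard) :
    B.ncard ≤ TB.ncard := by
  have h1 : NT'.ncard ≤ (NT \ B).ncard := Set.ncard_le_ncard hsub (Set.toFinite _)
  have h2 : (NT \ B).ncard = NT.ncard - B.ncard := Set.ncard_diff hB (Set.toFinite _)
  have h3 : B.ncard ≤ NT.ncard := Set.ncard_le_ncard hB (Set.toFinite _)
  omega

/-! ### Unions of independent sets and matchings -/

lemma indep_union {s t : Set V} (hs : AlmostBip.IsIndepSet G s) (ht : AlmostBip.IsIndepSet G t)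
    (hst : ∀ a ∈ s, ∀ b ∈ t, ¬ G.Adj a b) : AlmostBip.IsIndepSet G (s ∪ t) := by
  intro a ha b hb hne
  rcases ha with ha | ha <;> rcases hb with hb | hb
  · exact hs ha hb hne
  · exact hst a ha b hb
  · exact fun h => hst b hb a ha h.symm
  · exact ht ha hb hne

lemma matching_union {M₁ M₂ : Set (Sym2 V)} {U₁ U₂ : Set V}
    (h₁ : IsMatching G M₁) (h₂ : IsMatching G M₂)
    (hU₁ : ∀ e ∈ M₁, ∀ x ∈ e, x ∈ U₁) (hU₂ : ∀ e ∈ M₂, ∀ x ∈ e, x ∈ U₂)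
    (hU : Disjoint U₁ U₂) :
    IsMatching G (M₁ ∪ M₂) ∧ (M₁ ∪ M₂).ncard = M₁.ncard + M₂.ncard := by
  have hdisjM : Disjoint M₁ M₂ := by
    rw [Set.disjoint_left]
    intro e he₁ he₂
    induction e using Sym2.ind with
    | _ a b =>
      exact Set.disjoint_left.mp hU (hU₁ _ he₁ a (by simp)) (hU₂ _ he₂ a (by simp))
  have hsymm : Symmetric fun (e f : Sym2 V) => ∀ x, x ∈ e → x ∉ f := by
    intro e f h y hyf hye
    exact h y hye hyf
  constructor
  · refine ⟨Set.union_subset h₁.1 h₂.1, ?_⟩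
    haveI : Std.Symm fun (e f : Sym2 V) => ∀ x, x ∈ e → x ∉ f := ⟨fun _ _ h => hsymm h⟩
    rw [Set.pairwise_union_of_symm]
    refine ⟨h₁.2, h₂.2, ?_⟩
    intro e he f hf _ y hye hyf
    exact Set.disjoint_left.mp hU (hU₁ _ he y hye) (hU₂ _ hf y hyf)
  · exact Set.ncard_union_eq hdisjM (Set.toFinite _) (Set.toFinite _)

/-! ### Odd closed walks contain odd cycles -/

lemma exists_odd_cycle_of_odd_closed_walk {V' : Type*} {H : SimpleGraph V'} :
    ∀ n {z : V'} (w : H.Walk z z), w.length = n → Odd n →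
      ∃ (y : V') (c' : H.Walk y y), c'.IsCycle ∧ Odd c'.length := by
  intro n
  induction n using Nat.strong_induction_on with
  | _ n ih =>
    intro z w hlen hodd
    classical
    have hpos : 0 < w.length := by
      rw [hlen]; rcases hodd with ⟨k, hk⟩; omega
    have hne : ¬ w.Nil := SimpleGraph.Walk.not_nil_iff_lt_length.mpr hpos
    by_cases hnd : w.support.tail.Nodup
    · -- nodup tail : the walk is (almost) a cycle
      obtain ⟨b, hadj, q, rfl⟩ := SimpleGraph.Walk.not_nil_iff.mp hne
      have hq : q.IsPath := by
        refine SimpleGraph.Walk.IsPath.mk' ?_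
        simpa [SimpleGraph.Walk.support_cons] using hnd
      by_cases he : s(z, b) ∈ q.edges
      · exfalso
        have hqpos : 0 < q.length := by
          rcases Nat.eq_zero_or_pos q.length with h0 | h0
          · have : q.edges = [] := by
              have := SimpleGraph.Walk.length_edges q
              rw [h0] at this
              exact List.length_eq_zero_iff.mp this
            rw [this] at he
            exact absurd he List.not_mem_nil
          · exact h0
        have hqne : ¬ q.Nil := SimpleGraph.Walk.not_nil_iff_lt_length.mpr hqpos
        obtain ⟨d, hbd, r, rfl⟩ := SimpleGraph.Walk.not_nil_iff.mp hqne
        have hbr : b ∉ r.support := ((SimpleGraph.Walk.cons_isPath_iff _ _).mp hq).2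
        rw [SimpleGraph.Walk.edges_cons] at he
        rcases List.mem_cons.mp he with heq | hmem
        · -- s(z,b) = s(b,d) : so d = z and r is a path from z to z, hence nil
          have hzb : z ≠ b := hadj.ne
          rw [Sym2.eq_iff] at heq
          rcases heq with ⟨h1, _⟩ | ⟨h1, h2⟩
          · exact hzb h1
          · -- z = d
            subst h1
            have hr : r.IsPath := ((SimpleGraph.Walk.cons_isPath_iff _ _).mp hq).1
            have hrnil : r.Nil := by
              by_contra hrne
              obtain ⟨d', hzd', r', rfl⟩ := SimpleGraph.Walk.not_nil_iff.mp hrne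
              have := ((SimpleGraph.Walk.cons_isPath_iff _ _).mp hr).2
              exact this (SimpleGraph.Walk.end_mem_support r')
            have hr0 : r.length = 0 := SimpleGraph.Walk.nil_iff_length_eq.mp hrnil
            have hn2 : n = 2 := by
              rw [← hlen, SimpleGraph.Walk.length_cons, SimpleGraph.Walk.length_cons, hr0]
            rw [hn2, Nat.odd_iff] at hodd
            omega
        · -- s(z,b) ∈ r.edges : then b ∈ r.support, contradiction
          exact hbr (SimpleGraph.Walk.snd_mem_support_of_mem_edges r hmem)
      · exact ⟨z, SimpleGraph.Walk.cons hadj q,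
          (SimpleGraph.Walk.cons_isCycle_iff q hadj).mpr ⟨hq, he⟩, hlen ▸ hodd⟩
    · -- duplicate vertex in the tail : split into two shorter closed walks
      obtain ⟨y, hyc⟩ : ∃ y, 2 ≤ w.support.tail.count y := by
        by_contra hno
        push_neg at hno
        exact hnd (List.nodup_iff_count_le_one.mpr fun y => by have := hno y; omega)
      have hymem : y ∈ w.support := by
        apply List.mem_of_mem_tail
        exact List.count_pos_iff.mp (by omega)
      set w' := w.rotate y hymem with hw'
      have hlenrot : w'.length = w.length := by
        have hspec := congrArg SimpleGraph.Walk.length (w.take_spec hymem)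
        rw [SimpleGraph.Walk.length_append] at hspec
        rw [hw', SimpleGraph.Walk.rotate, SimpleGraph.Walk.length_append]
        omega
      have hcount : 2 ≤ w'.support.tail.count y := by
        have hrot := SimpleGraph.Walk.support_rotate w y hymem
        rw [hrot.perm.count_eq]
        exact hyc
      have hpos' : 0 < w'.length := by rw [hlenrot]; exact hpos
      have hne' : ¬ w'.Nil := SimpleGraph.Walk.not_nil_iff_lt_length.mpr hpos'
      obtain ⟨b, hadj, q, hform⟩ := SimpleGraph.Walk.not_nil_iff.mp hne'
      have hcq : 2 ≤ q.support.count y := by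
        rw [hform, SimpleGraph.Walk.support_cons] at hcount
        simpa using hcount
      have hyq : y ∈ q.support := List.count_pos_iff.mp (by omega)
      have hspec := q.take_spec hyq
      have hsupp : q.support = (q.takeUntil y hyq).support ++ (q.dropUntil y hyq).support.tail := by
        rw [← SimpleGraph.Walk.support_append, hspec]
      have hcnt1 : (q.takeUntil y hyq).support.count y = 1 :=
        SimpleGraph.Walk.count_support_takeUntil_eq_one q hyq
      have hdropnz : 0 < (q.dropUntil y hyq).length := by
        by_contra h0
        push_neg at h0
        have htl : (q.dropUntil y hyq).support.tail = [] := by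
          have hls := SimpleGraph.Walk.length_support (q.dropUntil y hyq)
          have h0' : (q.dropUntil y hyq).length = 0 := by omega
          rw [h0'] at hls
          have hlt : (q.dropUntil y hyq).support.tail.length = 0 := by
            rw [List.length_tail, hls]
          exact List.length_eq_zero_iff.mp hlt
        rw [hsupp, List.count_append, hcnt1, htl] at hcq
        simp at hcq
      have hlensum : 1 + (q.takeUntil y hyq).length + (q.dropUntil y hyq).length = n := by
        have hspec' := congrArg SimpleGraph.Walk.length hspec
        rw [SimpleGraph.Walk.length_append] at hspec'
        have hq : q.length + 1 = w'.length := by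
          rw [hform]; simp [SimpleGraph.Walk.length_cons]
        rw [hlenrot, hlen] at hq
        omega
      set w₁ : H.Walk y y := SimpleGraph.Walk.cons hadj (q.takeUntil y hyq) with hw₁
      set w₂ : H.Walk y y := q.dropUntil y hyq with hw₂
      have hl₁ : w₁.length = 1 + (q.takeUntil y hyq).length := by
        rw [hw₁, SimpleGraph.Walk.length_cons]; omega
      have hl₂ : w₂.length = (q.dropUntil y hyq).length := by rw [hw₂]
      rcases Nat.even_or_odd w₁.length with hev | hod
      · -- w₂ is odd and shorter
        have hodd₂ : Odd w₂.length := by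
          rw [Nat.odd_iff] at hodd ⊢
          rw [Nat.even_iff] at hev
          omega
        have hlt : w₂.length < n := by omega
        exact ih _ hlt w₂ rfl hodd₂
      · have hlt : w₁.length < n := by omega
        exact ih _ hlt w₁ rfl hod

end Auxiliary

section Auxiliary2

open SimpleGraph AlmostBip

variable {V : Type*} [Fintype V]

/-- Parity of walk lengths between two fixed vertices is constant when there is
no odd closed walk. -/
lemma walk_parity_const {H : SimpleGraph V}
    (h : ∀ (z : V) (w : H.Walk z z), ¬ Odd w.length) :
    ∀ (a b : V) (p q : H.Walk a b), p.length % 2 = q.length % 2 := by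
  intro a b p q
  by_contra hne
  have hodd := h a (p.append q.reverse)
  rw [Nat.odd_iff, SimpleGraph.Walk.length_append, SimpleGraph.Walk.length_reverse] at hodd
  omega

/-- A graph with no odd closed walk admits a proper 2-coloring. -/
lemma exists_two_coloring {H : SimpleGraph V}
    (h : ∀ (z : V) (w : H.Walk z z), ¬ Odd w.length) :
    ∃ co : V → Bool, ∀ u v, H.Adj u v → co u ≠ co v := by
  classical
  have hrep : ∀ u : V, H.Reachable u (Quot.out (H.connectedComponentMk u)) := by
    intro u
    have hmk : H.connectedComponentMk (Quot.out (H.connectedComponentMk u))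
        = H.connectedComponentMk u := Quot.out_eq _
    exact (SimpleGraph.ConnectedComponent.eq.mp hmk).symm
  refine ⟨fun u => if ∃ p : H.Walk u (Quot.out (H.connectedComponentMk u)), p.length % 2 = 0
      then true else false, ?_⟩
  intro u v hadj heq
  have hmk : H.connectedComponentMk u = H.connectedComponentMk v :=
    SimpleGraph.ConnectedComponent.sound hadj.reachable
  obtain ⟨p⟩ := hrep u
  have hout : Quot.out (H.connectedComponentMk v) = Quot.out (H.connectedComponentMk u) := by
    rw [hmk]
  simp only at heq
  by_cases h0 : p.length % 2 = 0
  · have hcu : ∃ p' : H.Walk u (Quot.out (H.connectedComponentMk u)), p'.length % 2 = 0 :=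
      ⟨p, h0⟩
    have hcv : ¬ ∃ p' : H.Walk v (Quot.out (H.connectedComponentMk v)), p'.length % 2 = 0 := by
      rintro ⟨p', hp'⟩
      have hpar := walk_parity_const h v (Quot.out (H.connectedComponentMk u))
        (p'.copy rfl hout) (SimpleGraph.Walk.cons hadj.symm p)
      rw [SimpleGraph.Walk.length_copy, SimpleGraph.Walk.length_cons] at hpar
      omega
    rw [if_pos hcu, if_neg hcv] at heq
    exact Bool.noConfusion heq
  · have hcu : ¬ ∃ p' : H.Walk u (Quot.out (H.connectedComponentMk u)), p'.length % 2 = 0 := by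
      rintro ⟨p', hp'⟩
      have hpar := walk_parity_const h u (Quot.out (H.connectedComponentMk u)) p' p
      omega
    have hcv : ∃ p' : H.Walk v (Quot.out (H.connectedComponentMk v)), p'.length % 2 = 0 := by
      refine ⟨(SimpleGraph.Walk.cons hadj.symm p).copy rfl hout.symm, ?_⟩
      rw [SimpleGraph.Walk.length_copy, SimpleGraph.Walk.length_cons]
      omega
    rw [if_neg hcu, if_pos hcv] at heq
    exact Bool.noConfusion heq

/-- Every vertex on a walk is the endpoint or belongs to one of its edges. -/
lemma exists_incident_edge_aux {V' : Type*} {H : SimpleGraph V'} {x : V'} :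
    ∀ {a b : V'} (w : H.Walk a b), x ∈ w.support → x = b ∨ ∃ e ∈ w.edges, x ∈ e := by
  intro a b w
  induction w with
  | nil => intro hx; left; simpa using hx
  | @cons u c d hadj q ih =>
    intro hx
    rw [SimpleGraph.Walk.support_cons] at hx
    rcases List.mem_cons.mp hx with rfl | hx'
    · exact Or.inr ⟨s(x, c), by simp [SimpleGraph.Walk.edges_cons], by simp⟩
    · rcases ih hx' with h | ⟨e, he, hxe⟩
      · exact Or.inl h
      · exact Or.inr ⟨e, by simp [SimpleGraph.Walk.edges_cons, he], hxe⟩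

lemma exists_incident_edge {V' : Type*} {H : SimpleGraph V'} {z x : V'}
    (w : H.Walk z z) (hpos : 0 < w.length) (hx : x ∈ w.support) :
    ∃ e ∈ w.edges, x ∈ e := by
  rcases exists_incident_edge_aux w hx with rfl | h
  · have hne : ¬ w.Nil := SimpleGraph.Walk.not_nil_iff_lt_length.mpr hpos
    obtain ⟨b, hadj, q, rfl⟩ := SimpleGraph.Walk.not_nil_iff.mp hne
    exact ⟨s(x, b), by simp [SimpleGraph.Walk.edges_cons], by simp⟩
  · exact h

/-- The restriction of `G` to a set of vertices (removing all other edges). -/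
def restrictG {V' : Type*} (G : SimpleGraph V') (W : Set V') : SimpleGraph V' where
  Adj a b := G.Adj a b ∧ a ∈ W ∧ b ∈ W
  symm := ⟨fun a b h => ⟨h.1.symm, h.2.2, h.2.1⟩⟩
  loopless := ⟨fun a h => G.loopless.irrefl a h.1⟩

lemma restrictG_le {V' : Type*} (G : SimpleGraph V') (W : Set V') : restrictG G W ≤ G :=
  fun _ _ h => h.1

lemma edges_mapLe {V' : Type*} {G G' : SimpleGraph V'} (hle : G ≤ G') {u v : V'}
    (p : G.Walk u v) : (p.mapLe hle).edges = p.edges := by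
  induction p with
  | nil => rfl
  | cons h q ih =>
    rw [SimpleGraph.Walk.mapLe] at *
    rw [SimpleGraph.Walk.map_cons, SimpleGraph.Walk.edges_cons, SimpleGraph.Walk.edges_cons, ih]
    rfl

end Auxiliary2

open SimpleGraph in
/-- If `G` is an almost bipartite non-König-Egerváry graph with unique odd cycle `C`,
then every critical independent set `A` of `G` satisfies `A ∩ V(C) = ∅`. -/
theorem stmt_10 {V : Type*} [Fintype V] (G : SimpleGraph V) (v : V)
    (c : G.Walk v v) (huniq : UniqueOddCycle G c)
    (hKE : ¬ KonigEgervary G) :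
    ∀ A : Set V, IsCriticalSet G A → AlmostBip.IsIndepSet G A →
      A ∩ cycleVerts c = ∅ := by
  classical
  intro A hcrit hindep
  have hcrit' : diffOf G A = critDiff G := hcrit
  by_contra hne
  obtain ⟨x, hxA, hxC⟩ := Set.nonempty_iff_ne_empty.mpr hne
  apply hKE
  have hadjN : ∀ a ∈ A, ∀ b, G.Adj a b → b ∈ nbhd G A := fun a ha b hab => ⟨a, ha, hab.symm⟩
  have hAN : Disjoint A (nbhd G A) := by
    rw [Set.disjoint_left]
    rintro a ha ⟨a', ha', haa'⟩
    exact hindep ha ha' haa'.ne haa'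
  set W : Set V := (A ∪ nbhd G A)ᶜ with hW
  have hxW : x ∉ W := fun h => h (Or.inl hxA)
  have hWnadjA : ∀ w ∈ W, ∀ a ∈ A, ¬ G.Adj a w := by
    intro w hw a ha hadj
    exact hw (Or.inr (hadjN a ha w hadj))
  -- Step 1: the graph restricted to `W` has no odd closed walk
  have hNoOdd : ∀ (z : V) (w : (restrictG G W).Walk z z), ¬ Odd w.length := by
    intro z w hodd
    obtain ⟨y, c', hcyc, hodd'⟩ := exists_odd_cycle_of_odd_closed_walk w.length w rfl hodd
    have hle := restrictG_le G W
    have hcyc'' : (c'.mapLe hle).IsCycle := (SimpleGraph.Walk.mapLe_isCycle hle).mpr hcyc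
    have hlen'' : (c'.mapLe hle).length = c'.length := SimpleGraph.Walk.length_mapLe hle c'
    have hkey := huniq.2 y (c'.mapLe hle) ⟨hcyc'', by rw [hlen'']; exact hodd'⟩
    have hcycC : c.IsCycle := huniq.1.1
    have hposC : 0 < c.length := by have := hcycC.three_le_length; omega
    obtain ⟨e, heC, hxe⟩ := exists_incident_edge c hposC hxC
    have heC'' : e ∈ (c'.mapLe hle).edges := by
      have h1 : e ∈ {e : Sym2 V | e ∈ c.edges} := heC
      rw [← hkey] at h1
      exact h1
    rw [edges_mapLe] at heC''
    have hW' := c'.edges_subset_edgeSet heC''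
    revert hW' hxe
    induction e using Sym2.ind with
    | _ a b =>
      intro hxe hW'
      rw [SimpleGraph.mem_edgeSet] at hW'
      rcases Sym2.mem_iff.mp hxe with rfl | rfl
      · exact hxW hW'.2.1
      · exact hxW hW'.2.2
  -- Step 2: a proper 2-coloring of the restricted graph
  obtain ⟨co, hco⟩ := exists_two_coloring hNoOdd
  have hcoW : ∀ u w, u ∈ W → w ∈ W → G.Adj u w → co u ≠ co w := fun u w hu hw hadj =>
    hco u w ⟨hadj, hu, hw⟩
  set X : Set V := {w ∈ W | co w = true} with hX
  set Y : Set V := {w ∈ W | co w = false} with hY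
  have hXW : X ⊆ W := fun w hw => hw.1
  have hYW : Y ⊆ W := fun w hw => hw.1
  have hXY : Disjoint X Y := by
    rw [Set.disjoint_left]
    rintro a ⟨-, ha⟩ ⟨-, hb⟩
    rw [ha] at hb
    exact Bool.noConfusion hb
  have hXuY : X ∪ Y = W := by
    ext w
    constructor
    · rintro (h | h) <;> exact h.1
    · intro hw
      rcases Bool.eq_false_or_eq_true (co w) with h | h
      · exact Or.inl ⟨hw, h⟩
      · exact Or.inr ⟨hw, h⟩
  set nbw : Set V → Set V := fun S => {q ∈ W | ∃ b ∈ S, G.Adj b q} with hnbw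
  have hnbwY : ∀ S ⊆ X, nbw S ⊆ Y := by
    intro S hSX q hq
    obtain ⟨hqW, b, hbS, hadj⟩ := hq
    have hbX := hSX hbS
    have hneq := hcoW b q (hXW hbX) hqW hadj
    have hfalse : co q ≠ true := fun h => hneq (by rw [hbX.2, h])
    exact ⟨hqW, by simpa using hfalse⟩
  -- Step 3: a maximum-deficiency subset of `X`
  set defc : Set V → ℤ := fun S => (S.ncard : ℤ) - ((nbw S).ncard : ℤ) with hdefc
  obtain ⟨T, hTX', hTmax⟩ := Set.exists_max_image {S : Set V | S ⊆ X} defc (Set.toFinite _)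
    ⟨∅, Set.empty_subset X⟩
  have hTX : T ⊆ X := hTX'
  have hnbTY : nbw T ⊆ Y := hnbwY T hTX
  -- Step 4: the three Hall conditions
  have cond_a : ∀ B ⊆ nbhd G A, B.ncard ≤ {q ∈ A | ∃ b ∈ B, G.Adj b q}.ncard := by
    intro B hBN
    have hTBA : {q ∈ A | ∃ b ∈ B, G.Adj b q} ⊆ A := fun q hq => hq.1
    have hsub : nbhd G (A \ {q ∈ A | ∃ b ∈ B, G.Adj b q}) ⊆ nbhd G A \ B := by
      rintro t ⟨a, ⟨haA, haTB⟩, hta⟩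
      refine ⟨⟨a, haA, hta⟩, fun htB => haTB ⟨haA, t, htB, hta⟩⟩
    have hdiff : diffOf G (A \ {q ∈ A | ∃ b ∈ B, G.Adj b q}) ≤ diffOf G A := by
      rw [hcrit']
      exact diffOf_le_critDiff G _
    have hATB : (A \ {q ∈ A | ∃ b ∈ B, G.Adj b q}).ncard
        = A.ncard - {q ∈ A | ∃ b ∈ B, G.Adj b q}.ncard := Set.ncard_diff hTBA (Set.toFinite _)
    have hTBle : {q ∈ A | ∃ b ∈ B, G.Adj b q}.ncard ≤ A.ncard :=
      Set.ncard_le_ncard hTBA (Set.toFinite _)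
    refine le_ncard_of_exchange hBN hsub ?_
    unfold AlmostBip.diffOf at hdiff
    rw [hATB, Nat.cast_sub hTBle] at hdiff
    omega
  have cond_b : ∀ B ⊆ nbw T, B.ncard ≤ {q ∈ T | ∃ b ∈ B, G.Adj b q}.ncard := by
    intro B hBn
    have hTBT : {q ∈ T | ∃ b ∈ B, G.Adj b q} ⊆ T := fun q hq => hq.1
    have hsub : nbw (T \ {q ∈ T | ∃ b ∈ B, G.Adj b q}) ⊆ nbw T \ B := by
      rintro t ⟨htW, a, ⟨haT, haTB⟩, hat⟩
      refine ⟨⟨htW, a, haT, hat⟩, fun htB => haTB ⟨haT, t, htB, hat.symm⟩⟩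
    have hdle : defc (T \ {q ∈ T | ∃ b ∈ B, G.Adj b q}) ≤ defc T :=
      hTmax _ (fun q hq => hTX hq.1)
    have hTTB : (T \ {q ∈ T | ∃ b ∈ B, G.Adj b q}).ncard
        = T.ncard - {q ∈ T | ∃ b ∈ B, G.Adj b q}.ncard := Set.ncard_diff hTBT (Set.toFinite _)
    have hTBle : {q ∈ T | ∃ b ∈ B, G.Adj b q}.ncard ≤ T.ncard :=
      Set.ncard_le_ncard hTBT (Set.toFinite _)
    have hmono : (nbw (T \ {q ∈ T | ∃ b ∈ B, G.Adj b q})).ncard ≤ (nbw T \ B).ncard :=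
      Set.ncard_le_ncard hsub (Set.toFinite _)
    refine le_ncard_of_exchange hBn hsub ?_
    simp only [hdefc] at hdle
    rw [hTTB, Nat.cast_sub hTBle] at hdle
    omega
  have cond_c : ∀ B ⊆ X \ T, B.ncard ≤ {q ∈ Y \ nbw T | ∃ b ∈ B, G.Adj b q}.ncard := by
    intro B hBX
    have hBT : Disjoint T B := by
      rw [Set.disjoint_left]
      intro t htT htB
      exact (hBX htB).2 htT
    have hsub : nbw (T ∪ B) ⊆ nbw T ∪ {q ∈ Y \ nbw T | ∃ b ∈ B, G.Adj b q} := by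
      rintro q ⟨hqW, a, haTB, haq⟩
      rcases haTB with haT | haB
      · exact Or.inl ⟨hqW, a, haT, haq⟩
      · by_cases hqn : q ∈ nbw T
        · exact Or.inl hqn
        · refine Or.inr ⟨⟨?_, hqn⟩, a, haB, haq⟩
          have haX : a ∈ X := (hBX haB).1
          have hneq := hcoW a q (hXW haX) hqW haq
          have hfq : co q ≠ true := fun hh => hneq (by rw [haX.2, hh])
          exact ⟨hqW, by simpa using hfq⟩
    have hdle : defc (T ∪ B) ≤ defc T :=
      hTmax _ (fun q hq => hq.elim (fun h => hTX h) (fun h => (hBX h).1))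
    have hTBcard : (T ∪ B).ncard = T.ncard + B.ncard :=
      Set.ncard_union_eq hBT (Set.toFinite _) (Set.toFinite _)
    have hnn : (nbw (T ∪ B)).ncard ≤ (nbw T).ncard
        + {q ∈ Y \ nbw T | ∃ b ∈ B, G.Adj b q}.ncard :=
      le_trans (Set.ncard_le_ncard hsub (Set.toFinite _)) (Set.ncard_union_le _ _)
    simp only [hdefc] at hdle
    rw [hTBcard] at hdle
    push_cast at hdle
    omega
  -- Step 5: the three matchings
  obtain ⟨M₀, hM₀, hM₀c, hM₀e⟩ := exists_hall_matching G (nbhd G A) A hAN.symm cond_a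
  have hdisj₁ : Disjoint (nbw T) T := Disjoint.mono hnbTY hTX hXY.symm
  obtain ⟨M₁, hM₁, hM₁c, hM₁e⟩ := exists_hall_matching G (nbw T) T hdisj₁ cond_b
  have hdisj₂ : Disjoint (X \ T) (Y \ nbw T) :=
    Disjoint.mono Set.diff_subset Set.diff_subset hXY
  obtain ⟨M₂, hM₂, hM₂c, hM₂e⟩ := exists_hall_matching G (X \ T) (Y \ nbw T) hdisj₂ cond_c
  -- Step 6: the big independent set
  have hTind : AlmostBip.IsIndepSet G T := by
    intro a ha b hb _
    exact fun hadj => hcoW a b (hXW (hTX ha)) (hXW (hTX hb)) hadj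
      (by rw [(hTX ha).2, (hTX hb).2])
  have hYdind : AlmostBip.IsIndepSet G (Y \ nbw T) := by
    intro a ha b hb _
    exact fun hadj => hcoW a b (hYW ha.1) (hYW hb.1) hadj (by rw [ha.1.2, hb.1.2])
  have hindep2 : AlmostBip.IsIndepSet G (T ∪ (Y \ nbw T)) := by
    refine indep_union hTind hYdind ?_
    intro a ha b hb hadj
    exact hb.2 ⟨hYW hb.1, a, ha, hadj⟩
  have hrestW : T ∪ (Y \ nbw T) ⊆ W := fun b hb =>
    hb.elim (fun h => hXW (hTX h)) (fun h => hYW h.1)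
  have hSIindep : AlmostBip.IsIndepSet G (A ∪ (T ∪ (Y \ nbw T))) := by
    refine indep_union hindep hindep2 ?_
    intro a ha b hb hadj
    exact hWnadjA b (hrestW hb) a ha hadj
  have hAW : Disjoint A W := by
    rw [Set.disjoint_left]
    intro a ha haW
    exact haW (Or.inl ha)
  have hA_rest : Disjoint A (T ∪ (Y \ nbw T)) := Disjoint.mono_right hrestW hAW
  have hT_Yd : Disjoint T (Y \ nbw T) := Disjoint.mono hTX Set.diff_subset hXY
  have hSIc : (A ∪ (T ∪ (Y \ nbw T))).ncard
      = A.ncard + (T.ncard + (Y \ nbw T).ncard) := by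
    rw [Set.ncard_union_eq hA_rest (Set.toFinite _) (Set.toFinite _),
      Set.ncard_union_eq hT_Yd (Set.toFinite _) (Set.toFinite _)]
  -- Step 7: union of the matchings
  have hU12 : Disjoint (nbw T ∪ T) ((X \ T) ∪ (Y \ nbw T)) := by
    rw [Set.disjoint_left]
    rintro a (ha | ha) (hb | hb)
    · exact Set.disjoint_left.mp hXY hb.1 (hnbTY ha)
    · exact hb.2 ha
    · exact hb.2 ha
    · exact Set.disjoint_left.mp hXY (hTX ha) hb.1
  have hM12e' : ∀ e ∈ M₁ ∪ M₂, ∀ y ∈ e, y ∈ (nbw T ∪ T) ∪ ((X \ T) ∪ (Y \ nbw T)) := by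
    rintro e (he | he) y hy
    · exact Or.inl (hM₁e e he y hy)
    · exact Or.inr (hM₂e e he y hy)
  obtain ⟨hM12, hM12c⟩ := matching_union hM₁ hM₂ hM₁e hM₂e hU12
  have hWsub : (nbw T ∪ T) ∪ ((X \ T) ∪ (Y \ nbw T)) ⊆ W := by
    rintro a ((ha | ha) | (ha | ha))
    · exact hYW (hnbTY ha)
    · exact hXW (hTX ha)
    · exact hXW ha.1
    · exact hYW ha.1
  have hU0 : Disjoint (nbhd G A ∪ A) ((nbw T ∪ T) ∪ ((X \ T) ∪ (Y \ nbw T))) := by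
    refine Disjoint.mono_right hWsub ?_
    rw [Set.disjoint_left]
    intro a ha haW
    exact haW (ha.elim Or.inr Or.inl)
  have hM₀e' : ∀ e ∈ M₀, ∀ y ∈ e, y ∈ nbhd G A ∪ A := hM₀e
  obtain ⟨hMall, hMallc⟩ := matching_union hM₀ hM12 hM₀e' hM12e' hU0
  -- Step 8: counting
  have h1 : T.ncard + (X \ T).ncard = X.ncard := by
    have hd := Set.ncard_diff hTX (Set.toFinite _)
    have hl := Set.ncard_le_ncard hTX (Set.toFinite _)
    omega
  have h2 : (nbw T).ncard + (Y \ nbw T).ncard = Y.ncard := by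
    have hd := Set.ncard_diff hnbTY (Set.toFinite _)
    have hl := Set.ncard_le_ncard hnbTY (Set.toFinite _)
    omega
  have h3 : X.ncard + Y.ncard = W.ncard := by
    rw [← hXuY]
    exact (Set.ncard_union_eq hXY (Set.toFinite _) (Set.toFinite _)).symm
  have h4 : A.ncard + (nbhd G A).ncard = (A ∪ nbhd G A).ncard :=
    (Set.ncard_union_eq hAN (Set.toFinite _) (Set.toFinite _)).symm
  have h5 : (A ∪ nbhd G A).ncard + W.ncard = Nat.card V := by
    rw [hW]
    exact Set.ncard_add_ncard_compl _
  have halpha : A.ncard + (T.ncard + (Y \ nbw T).ncard) ≤ alpha G :=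
    hSIc ▸ le_alpha hSIindep
  have hmu : (nbhd G A).ncard + ((nbw T).ncard + (X \ T).ncard) ≤ mu G := by
    have h := le_mu (G := G) hMall
    rw [hMallc, hM12c, hM₀c, hM₁c, hM₂c] at h
    exact h
  have hle := alpha_add_mu_le G
  show alpha G + mu G = Nat.card V
  omega
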